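/- Let K be a compact Hausdorff space and let C(K; ℂ) be the space of continuous complex-valued functions on K with the uniform norm ‖f‖ = max_{x∈K} |f(x)|. Let n ≥ 1, let M be an n-dimensional complex subspace of C(K; ℂ) such that no nonzero m ∈ M vanishes at more than n−1 distinct points of K (a Haar space), let f ∈ C(K; ℂ), and let m* ∈ M be a best approximant to f from M. Then there exists c > 0, depending only on f and M, such that ‖f − m‖² − ‖f − m*‖² ≥ c‖m − m*‖² for all m ∈ M; consequently, for every σ > 0, every m ∈ M with ‖f − m‖ − ‖f − m*‖ ≤ σ satisfies ‖f − m‖ − ‖f − m*‖ ≥ γ‖m − m*‖², where γ = c/(2‖f − m*‖ + σ). -/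

import Mathlib

set_option maxHeartbeats 1000000

/-! Auxiliary lemmas for Newman–Shapiro (complex strong unicity of order 2). -/

private lemma norm_sq_complex (z : ℂ) : ‖z‖ ^ 2 = Complex.normSq z := by
  rw [Complex.sq_norm]

private lemma norm_add_sq_c (a b : ℂ) :
    ‖a + b‖ ^ 2 = ‖a‖ ^ 2 + 2 * (a * (starRingEnd ℂ) b).re + ‖b‖ ^ 2 := by
  rw [norm_sq_complex, norm_sq_complex, norm_sq_complex, Complex.normSq_add]
  ring

private lemma norm_sub_smul_sq (a b : ℂ) (r : ℝ) :
    ‖a - (r : ℂ) * b‖ ^ 2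
      = ‖a‖ ^ 2 - 2 * r * (a * (starRingEnd ℂ) b).re + r ^ 2 * ‖b‖ ^ 2 := by
  have h := norm_add_sq_c a (-((r : ℂ) * b))
  rw [← sub_eq_add_neg] at h
  rw [h, norm_neg, norm_mul, Complex.norm_real, Real.norm_eq_abs]
  have h2 : (a * (starRingEnd ℂ) (-((r : ℂ) * b))).re
      = -(r * (a * (starRingEnd ℂ) b).re) := by
    rw [map_neg, map_mul, Complex.conj_ofReal, mul_neg,
      show a * ((r : ℂ) * (starRingEnd ℂ) b) = (r : ℂ) * (a * (starRingEnd ℂ) b) by ring,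
      Complex.neg_re, Complex.re_ofReal_mul]
  rw [h2, mul_pow, sq_abs]
  ring

/-- Convex hull of a nonempty compact set in a finite-dimensional real normed
space is compact. -/
private lemma my_isCompact_convexHull {E : Type*} [NormedAddCommGroup E] [NormedSpace ℝ E]
    [FiniteDimensional ℝ E] {s : Set E} (hs : IsCompact s) (hne : s.Nonempty) :
    IsCompact (convexHull ℝ s) := by
  classical
  set d := Module.finrank ℝ E + 1 with hd
  obtain ⟨p0, hp0⟩ := hne
  have hT : IsCompact ((stdSimplex ℝ (Fin d)) ×ˢ (Set.univ.pi fun _ : Fin d => s)) :=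
    (isCompact_stdSimplex (𝕜 := ℝ) (ι := Fin d)).prod (isCompact_univ_pi fun _ => hs)
  have hg : Continuous fun p : (Fin d → ℝ) × (Fin d → E) => ∑ j, p.1 j • p.2 j := by
    apply continuous_finset_sum
    intro j _
    exact ((continuous_apply j).comp continuous_fst).smul
      ((continuous_apply j).comp continuous_snd)
  have himg : (fun p : (Fin d → ℝ) × (Fin d → E) => ∑ j, p.1 j • p.2 j) ''
      ((stdSimplex ℝ (Fin d)) ×ˢ (Set.univ.pi fun _ : Fin d => s)) = convexHull ℝ s := by
    apply Set.Subset.antisymm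
    · rintro y ⟨⟨w, z⟩, ⟨⟨hw0, hw1⟩, hz⟩, rfl⟩
      have hmem := Finset.centerMass_mem_convexHull (R := ℝ) (s := s) Finset.univ
        (fun j _ => hw0 j) (by rw [hw1]; norm_num)
        (fun j _ => hz j (Set.mem_univ j))
      rwa [Finset.centerMass_eq_of_sum_1 _ _ hw1] at hmem
    · intro y hy
      obtain ⟨ι, hfin, z, w, hzs, haff, hw0, hw1, hsum⟩ :=
        eq_pos_convex_span_of_mem_convexHull hy
      have hcard : Fintype.card ι ≤ d := by
        have h1 := haff.card_le_finrank_succ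
        have h2 : Module.finrank ℝ ↥(vectorSpan ℝ (Set.range z)) ≤ Module.finrank ℝ E :=
          Submodule.finrank_le _
        omega
      let emb : ι ↪ Fin d := (Fintype.equivFin ι).toEmbedding.trans (Fin.castLEEmb hcard)
      let w' : Fin d → ℝ := fun j => if h : ∃ i, emb i = j then w h.choose else 0
      let z' : Fin d → E := fun j => if h : ∃ i, emb i = j then z h.choose else p0
      have hvalw : ∀ i : ι, w' (emb i) = w i := by
        intro i
        have h : ∃ i', emb i' = emb i := ⟨i, rfl⟩
        have hch : h.choose = i := emb.injective h.choose_spec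
        simp only [w', dif_pos h, hch]
      have hvalz : ∀ i : ι, z' (emb i) = z i := by
        intro i
        have h : ∃ i', emb i' = emb i := ⟨i, rfl⟩
        have hch : h.choose = i := emb.injective h.choose_spec
        simp only [z', dif_pos h, hch]
      have htrans : ∀ (g : Fin d → E), (∀ j, (¬ ∃ i, emb i = j) → g j = 0) →
          ∑ j, g j = ∑ i, g (emb i) := by
        intro g hg0
        rw [← Finset.sum_map Finset.univ emb g]
        refine (Finset.sum_subset (Finset.subset_univ _) ?_).symm
        intro j _ hj
        refine hg0 j fun ⟨i, hi⟩ => hj ?_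
        rw [Finset.mem_map]
        exact ⟨i, Finset.mem_univ i, hi⟩
      have htransr : ∀ (g : Fin d → ℝ), (∀ j, (¬ ∃ i, emb i = j) → g j = 0) →
          ∑ j, g j = ∑ i, g (emb i) := by
        intro g hg0
        rw [← Finset.sum_map Finset.univ emb g]
        refine (Finset.sum_subset (Finset.subset_univ _) ?_).symm
        intro j _ hj
        refine hg0 j fun ⟨i, hi⟩ => hj ?_
        rw [Finset.mem_map]
        exact ⟨i, Finset.mem_univ i, hi⟩
      refine ⟨⟨w', z'⟩, ⟨⟨fun j => ?_, ?_⟩, fun j _ => ?_⟩, ?_⟩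
      · by_cases h : ∃ i, emb i = j
        · simp only [w', dif_pos h]; exact (hw0 _).le
        · simp only [w', dif_neg h]; exact le_refl 0
      · rw [htransr w' (fun j hj => by simp only [w', dif_neg hj])]
        rw [← hw1]
        exact Finset.sum_congr rfl fun i _ => hvalw i
      · by_cases h : ∃ i, emb i = j
        · simp only [z', dif_pos h]
          exact hzs (Set.mem_range_self _)
        · simp only [z', dif_neg h]; exact hp0
      · have := htrans (fun j => w' j • z' j)
          (fun j hj => by simp only [w', dif_neg hj, zero_smul])
        show (∑ j : Fin d, w' j • z' j) = y
        rw [this]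
        rw [← hsum]
        exact Finset.sum_congr rfl fun i _ => by rw [hvalw i, hvalz i]
  have := hT.image hg
  rwa [himg] at this

/-- (Newman–Shapiro, complex case.)  Let `M` be an
`n`-dimensional complex Haar subspace of `C(K; ℂ)` (`n ≥ 1`; no nonzero `m ∈ M`
vanishes at `n` distinct points of `K`), and let `m* ∈ M` be a best approximant to
`f ∈ C(K; ℂ)`.  Then there is `c > 0` (depending only on `f` and `M`) with
`‖f − m‖² − ‖f − m*‖² ≥ c‖m − m*‖²` for all `m ∈ M`; consequently, for every
`σ > 0`, every `m ∈ M` with `‖f − m‖ − ‖f − m*‖ ≤ σ` satisfies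
`‖f − m‖ − ‖f − m*‖ ≥ (c/(2‖f − m*‖ + σ))·‖m − m*‖²`. -/
theorem stmt_19 {K : Type*} [TopologicalSpace K] [CompactSpace K] [T2Space K]
    (n : ℕ) (hn : 1 ≤ n)
    (M : Submodule ℂ C(K, ℂ)) (hdim : Module.finrank ℂ M = n)
    (hHaar : ∀ m ∈ M, m ≠ 0 →
      ¬ ∃ x : Fin n → K, Function.Injective x ∧ ∀ i, m (x i) = 0)
    (f : C(K, ℂ)) (mstar : C(K, ℂ)) (hmem : mstar ∈ M)
    (hbest : ∀ m ∈ M, ‖f - mstar‖ ≤ ‖f - m‖) :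
    ∃ c : ℝ, 0 < c ∧
      (∀ m ∈ M, c * ‖m - mstar‖ ^ 2 ≤ ‖f - m‖ ^ 2 - ‖f - mstar‖ ^ 2) ∧
      ∀ σ : ℝ, 0 < σ → ∀ m ∈ M, ‖f - m‖ - ‖f - mstar‖ ≤ σ →
        (c / (2 * ‖f - mstar‖ + σ)) * ‖m - mstar‖ ^ 2 ≤ ‖f - m‖ - ‖f - mstar‖ := by
  classical
  -- Part 2 is a consequence of Part 1.
  suffices h : ∃ c : ℝ, 0 < c ∧
      ∀ m ∈ M, c * ‖m - mstar‖ ^ 2 ≤ ‖f - m‖ ^ 2 - ‖f - mstar‖ ^ 2 by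
    obtain ⟨c, hc, h1⟩ := h
    refine ⟨c, hc, h1, ?_⟩
    intro σ hσ m hm hσ2
    have hD : 0 ≤ ‖f - m‖ - ‖f - mstar‖ := sub_nonneg.2 (hbest m hm)
    have hden : 0 < 2 * ‖f - mstar‖ + σ := by positivity
    rw [div_mul_eq_mul_div, div_le_iff₀ hden]
    calc c * ‖m - mstar‖ ^ 2 ≤ ‖f - m‖ ^ 2 - ‖f - mstar‖ ^ 2 := h1 m hm
      _ = (‖f - m‖ - ‖f - mstar‖) * (‖f - m‖ + ‖f - mstar‖) := by ring
      _ ≤ (‖f - m‖ - ‖f - mstar‖) * (2 * ‖f - mstar‖ + σ) := by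
          apply mul_le_mul_of_nonneg_left _ hD
          linarith
  have hfinM : FiniteDimensional ℂ ↥M := FiniteDimensional.of_finrank_pos (by omega)
  -- K is nonempty.
  have hK : Nonempty K := by
    by_contra hnone
    rw [not_nonempty_iff] at hnone
    haveI : Subsingleton C(K, ℂ) :=
      ⟨fun a b => ContinuousMap.ext fun x => (hnone.false x).elim⟩
    haveI : Subsingleton ↥M := ⟨fun a b => Subtype.ext (Subsingleton.elim _ _)⟩
    have h0 : Module.finrank ℂ ↥M = 0 := Module.finrank_zero_of_subsingleton
    omega
  -- Trivial case: `f ∈ M`.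
  by_cases hfM : f ∈ M
  · have hms : f = mstar := by
      have h0 := hbest f hfM
      rw [sub_self, norm_zero] at h0
      exact sub_eq_zero.mp (norm_le_zero_iff.mp h0)
    refine ⟨1, one_pos, ?_⟩
    intro m hm
    rw [← hms, sub_self, norm_zero, norm_sub_rev]
    ring_nf
    exact le_refl _
  -- Main case: `f ∉ M`.
  set e : C(K, ℂ) := f - mstar with he
  set A : ℝ := ‖e‖ with hA
  have hApos : 0 < A := by
    rw [hA, norm_pos_iff]
    intro h0
    exact hfM (by rw [sub_eq_zero] at h0; rw [h0]; exact hmem)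
  -- norm attainment for continuous maps on the compact space K
  have normatt : ∀ h : C(K, ℂ), ∃ x, ‖h x‖ = ‖h‖ := by
    intro h
    obtain ⟨x₀, -, hx₀⟩ := isCompact_univ.exists_isMaxOn Set.univ_nonempty
      ((map_continuous h).norm.continuousOn)
    refine ⟨x₀, le_antisymm (h.norm_coe_le_norm x₀) ?_⟩
    exact (h.norm_le (norm_nonneg _)).mpr fun x => hx₀ (Set.mem_univ x)
  set X : Set K := {x | ‖e x‖ = A} with hX
  obtain ⟨x₁, hx₁⟩ := normatt e
  have hx₁X : x₁ ∈ X := hx₁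
  have hXcomp : IsCompact X := by
    have hclosed : IsClosed X := by
      have : X = (fun x => ‖e x‖) ⁻¹' {A} := by
        ext x; simp [hX]
      rw [this]
      exact isClosed_singleton.preimage (map_continuous e).norm
    exact hclosed.isCompact
  -- Kolmogorov criterion
  have kol : ∀ v : ↥M, ∃ x, x ∈ X ∧ (e x * (starRingEnd ℂ) ((v : C(K, ℂ)) x)).re ≤ 0 := by
    intro v
    by_contra hcon
    push_neg at hcon
    set mv : C(K, ℂ) := (v : C(K, ℂ)) with hmv
    set g : K → ℝ := fun x => (e x * (starRingEnd ℂ) (mv x)).re with hgdef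
    have hgc : Continuous g := by
      apply Complex.continuous_re.comp
      exact (map_continuous e).mul ((Complex.continuous_conj).comp (map_continuous mv))
    obtain ⟨xδ, hxδX, hδmin⟩ := hXcomp.exists_isMinOn ⟨x₁, hx₁X⟩ hgc.continuousOn
    set δ : ℝ := g xδ with hδdef
    have hδpos : 0 < δ := hcon xδ hxδX
    set U : Set K := {x | δ / 2 < g x} with hU
    have hUopen : IsOpen U := isOpen_lt continuous_const hgc
    have hXU : ∀ x ∈ X, x ∈ U := by
      intro x hx
      have h2 : δ ≤ g x := hδmin hx
      simp only [hU, Set.mem_setOf_eq]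
      linarith
    obtain ⟨A', hA'lt, hA'bd⟩ : ∃ A', A' < A ∧ ∀ x, x ∉ U → ‖e x‖ ≤ A' := by
      by_cases hcne : (Uᶜ : Set K).Nonempty
      · obtain ⟨x₂, hx₂mem, hmax⟩ := (hUopen.isClosed_compl.isCompact).exists_isMaxOn hcne
          ((map_continuous e).norm.continuousOn)
        refine ⟨‖e x₂‖, lt_of_le_of_ne (e.norm_coe_le_norm x₂) fun habs => hx₂mem (hXU _ habs), ?_⟩
        intro x hx
        exact hmax (a := x) hx
      · refine ⟨0, hApos, fun x hx => ?_⟩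
        exfalso
        rw [Set.not_nonempty_iff_eq_empty] at hcne
        have hxc : x ∈ (Uᶜ : Set K) := hx
        rw [hcne] at hxc
        exact hxc
    set t : ℝ := min (δ / (2 * (‖mv‖ ^ 2 + 1))) ((A - A') / (2 * (‖mv‖ + 1))) with htdef
    have ht0 : 0 < t := by
      apply lt_min
      · positivity
      · have : 0 < A - A' := by linarith
        positivity
    have ht1 : t ≤ δ / (2 * (‖mv‖ ^ 2 + 1)) := min_le_left _ _
    have ht2 : t ≤ (A - A') / (2 * (‖mv‖ + 1)) := min_le_right _ _
    have hpt : ∀ x : K, ‖(f - (mstar + (t : ℂ) • mv)) x‖ < A := by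
      intro x
      have heq : (f - (mstar + (t : ℂ) • mv)) x = e x - (t : ℂ) * mv x := by
        simp only [he, ContinuousMap.sub_apply, ContinuousMap.add_apply,
          ContinuousMap.smul_apply, smul_eq_mul]
        ring
      rw [heq]
      have hmx : ‖mv x‖ ≤ ‖mv‖ := mv.norm_coe_le_norm x
      by_cases hxU : x ∈ U
      · have hsq := norm_sub_smul_sq (e x) (mv x) t
        have hgx : δ / 2 < (e x * (starRingEnd ℂ) (mv x)).re := hxU
        have hex : ‖e x‖ ≤ A := by rw [hA]; exact e.norm_coe_le_norm x
        have hb1 : t * (‖mv‖ ^ 2 + 1) ≤ δ / 2 := by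
          rw [le_div_iff₀ (by positivity : (0:ℝ) < 2 * (‖mv‖ ^ 2 + 1))] at ht1
          linarith
        have hsqlt : ‖e x - (t : ℂ) * mv x‖ ^ 2 < A ^ 2 := by
          rw [hsq]
          have hmx2 : ‖mv x‖ ^ 2 ≤ ‖mv‖ ^ 2 := pow_le_pow_left₀ (norm_nonneg _) hmx 2
          have h1 : t ^ 2 * ‖mv x‖ ^ 2 ≤ t * (δ / 2) := by
            calc t ^ 2 * ‖mv x‖ ^ 2 = t * (t * ‖mv x‖ ^ 2) := by ring
              _ ≤ t * (t * (‖mv‖ ^ 2 + 1)) := mul_le_mul_of_nonneg_left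
                  (mul_le_mul_of_nonneg_left (by linarith) ht0.le) ht0.le
              _ ≤ t * (δ / 2) := mul_le_mul_of_nonneg_left hb1 ht0.le
          have h2 : t * (δ / 2) ≤ t * (e x * (starRingEnd ℂ) (mv x)).re :=
            mul_le_mul_of_nonneg_left hgx.le ht0.le
          have hex2 : ‖e x‖ ^ 2 ≤ A ^ 2 := pow_le_pow_left₀ (norm_nonneg _) hex 2
          have htδ : 0 < t * (δ / 2) := mul_pos ht0 (by linarith)
          linarith
        exact lt_of_pow_lt_pow_left₀ 2 hApos.le hsqlt
      · have hbd : ‖e x‖ ≤ A' := hA'bd x hxU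
        have h1 : ‖e x - (t : ℂ) * mv x‖ ≤ ‖e x‖ + t * ‖mv x‖ := by
          calc ‖e x - (t : ℂ) * mv x‖ ≤ ‖e x‖ + ‖(t : ℂ) * mv x‖ := norm_sub_le _ _
            _ = ‖e x‖ + t * ‖mv x‖ := by
                rw [norm_mul, Complex.norm_real, Real.norm_eq_abs, abs_of_pos ht0]
        have hb2 : t * (‖mv‖ + 1) ≤ (A - A') / 2 := by
          rw [le_div_iff₀ (by positivity : (0:ℝ) < 2 * (‖mv‖ + 1))] at ht2
          linarith
        have h2 : t * ‖mv x‖ ≤ t * (‖mv‖ + 1) := by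
          apply mul_le_mul_of_nonneg_left _ ht0.le
          linarith
        linarith
    obtain ⟨y, hy⟩ := normatt (f - (mstar + (t : ℂ) • mv))
    have hlt : ‖f - (mstar + (t : ℂ) • mv)‖ < A := by rw [← hy]; exact hpt y
    have hge := hbest (mstar + (t : ℂ) • mv) (M.add_mem hmem (M.smul_mem _ v.2))
    linarith
  -- n distinct points exist in K
  have hnpts : ∃ P : Finset K, P.card = n := by
    rcases finite_or_infinite K with hfin | hinf
    · haveI := Fintype.ofFinite K
      have hle : n ≤ Fintype.card K := by
        let Φ : ↥M →ₗ[ℂ] (K → ℂ) :=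
          { toFun := fun m x => (m : C(K, ℂ)) x
            map_add' := fun a b => by funext x; simp
            map_smul' := fun c a => by funext x; simp }
        have hinj : Function.Injective Φ := by
          intro a b hab
          apply Subtype.ext
          apply ContinuousMap.ext
          intro x
          exact congrFun hab x
        have := LinearMap.finrank_le_finrank_of_injective hinj
        rwa [hdim, Module.finrank_fintype_fun_eq_card] at this
      obtain ⟨P, -, hP⟩ := Finset.exists_subset_card_eq
        (show n ≤ (Finset.univ : Finset K).card by simpa using hle)
      exact ⟨P, hP⟩
    · haveI : Infinite K := hinf
      obtain ⟨P, -, hP⟩ := (Set.infinite_univ (α := K)).exists_subset_card_eq n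
      exact ⟨P, hP⟩
  -- interpolation at n points
  have interp : ∀ P : Finset K, P.card = n → ∀ gfun : K → ℂ,
      ∃ mI, mI ∈ M ∧ ∀ y ∈ P, mI y = gfun y := by
    intro P hP gfun
    let EV : ↥M →ₗ[ℂ] (↥P → ℂ) :=
      { toFun := fun v y => (v : C(K, ℂ)) y
        map_add' := fun a b => by funext y; simp
        map_smul' := fun c a => by funext y; simp }
    have hker : ∀ v : ↥M, EV v = 0 → v = 0 := by
      intro v hv
      by_contra hv0
      refine hHaar ↑v v.2 (fun hc => hv0 (ZeroMemClass.coe_eq_zero.mp hc)) ?_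
      have hEq := P.equivFinOfCardEq hP
      refine ⟨fun i => ↑(hEq.symm i), fun i₁ i₂ h =>
        hEq.symm.injective (Subtype.val_injective h), fun i => ?_⟩
      exact congrFun hv (hEq.symm i)
    have hinj : Function.Injective EV := by
      intro a b hab
      have := hker (a - b) (by rw [map_sub, hab, sub_self])
      rwa [sub_eq_zero] at this
    have hfr : Module.finrank ℂ ↥M = Module.finrank ℂ (↥P → ℂ) := by
      rw [hdim, Module.finrank_fintype_fun_eq_card, Fintype.card_coe, hP]
    have hsurj := (LinearMap.injective_iff_surjective_of_finrank_eq_finrank hfr).mp hinj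
    obtain ⟨v, hv⟩ := hsurj fun y => gfun ↑y
    exact ⟨↑v, v.2, fun y hy => congrFun hv ⟨y, hy⟩⟩
  -- basis and the map W
  let b : Module.Basis (Fin n) ℂ ↥M := Module.finBasisOfFinrankEq ℂ ↥M hdim
  set W : K → Fin n → ℂ := fun x j => e x * (starRingEnd ℂ) ((b j : C(K, ℂ)) x) with hW
  have hWc : Continuous W := by
    apply continuous_pi
    intro j
    exact (map_continuous e).mul
      ((Complex.continuous_conj).comp (map_continuous (b j : C(K, ℂ))))
  -- pairing identity
  have hpair : ∀ (v : ↥M) (x : K),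
      e x * (starRingEnd ℂ) ((v : C(K, ℂ)) x)
        = ∑ j, (starRingEnd ℂ) (b.repr v j) * W x j := by
    intro v x
    have hv : ((v : C(K, ℂ)) x) = ∑ j, b.repr v j * ((b j : C(K, ℂ)) x) := by
      conv_lhs => rw [← b.sum_repr v]
      rw [Submodule.coe_sum]
      rw [ContinuousMap.sum_apply]
      exact Finset.sum_congr rfl fun j _ => by
        rw [Submodule.coe_smul, ContinuousMap.smul_apply, smul_eq_mul]
    rw [hv, map_sum, Finset.mul_sum]
    refine Finset.sum_congr rfl fun j _ => ?_
    rw [map_mul, hW]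
    ring
  -- 0 is in the convex hull of W '' X
  have hCHcomp : IsCompact (convexHull ℝ (W '' X)) :=
    my_isCompact_convexHull (hXcomp.image hWc) ⟨W x₁, Set.mem_image_of_mem _ hx₁X⟩
  have hzero : (0 : Fin n → ℂ) ∈ convexHull ℝ (W '' X) := by
    by_contra h0
    obtain ⟨ℓ, u, hlt, hgt⟩ := geometric_hahn_banach_closed_point
      (convex_convexHull ℝ _) hCHcomp.isClosed h0
    rw [map_zero] at hgt
    set cc : Fin n → ℂ := fun j =>
      (ℓ (Pi.single j 1) : ℂ) + (ℓ (Pi.single j Complex.I) : ℂ) * Complex.I with hcc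
    have hccre : ∀ j, (cc j).re = ℓ (Pi.single j 1) := by
      intro j; simp [hcc]
    have hccim : ∀ j, (cc j).im = ℓ (Pi.single j Complex.I) := by
      intro j; simp [hcc]
    have hdecomp : ∀ wv : Fin n → ℂ, ℓ wv = ∑ j, ((starRingEnd ℂ) (cc j) * wv j).re := by
      intro wv
      have hw : wv = ∑ j, Pi.single j (wv j) := (Finset.univ_sum_single wv).symm
      conv_lhs => rw [hw]
      rw [map_sum]
      refine Finset.sum_congr rfl fun j _ => ?_
      have hz : (Pi.single j (wv j) : Fin n → ℂ)
          = (wv j).re • (Pi.single j (1 : ℂ) : Fin n → ℂ)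
            + (wv j).im • (Pi.single j Complex.I : Fin n → ℂ) := by
        funext k
        by_cases hk : k = j
        · subst hk
          simp only [Pi.single_eq_same, Pi.add_apply, Pi.smul_apply, Complex.real_smul,
            Complex.ofReal_mul]
          rw [mul_one, Complex.re_add_im]
        · simp [Pi.single_eq_of_ne hk]
      rw [hz, map_add, map_smul, map_smul, smul_eq_mul, smul_eq_mul]
      have hre : ((starRingEnd ℂ) (cc j) * wv j).re
          = (cc j).re * (wv j).re + (cc j).im * (wv j).im := by
        rw [Complex.mul_re, Complex.conj_re, Complex.conj_im]
        ring
      rw [hre, hccre, hccim]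
      ring
    set m0 : ↥M := ∑ j, cc j • b j with hm0
    have hrepr : ∀ j, b.repr m0 j = cc j := by
      intro j
      rw [hm0]
      exact congrFun (b.repr_sum_self cc) j
    have hval : ∀ x ∈ X, (e x * (starRingEnd ℂ) ((m0 : C(K, ℂ)) x)).re = ℓ (W x) := by
      intro x hx
      rw [hpair m0 x, Complex.re_sum, hdecomp (W x)]
      exact Finset.sum_congr rfl fun j _ => by rw [hrepr j]
    obtain ⟨x, hxX, hxle⟩ := kol (-m0)
    have hcoe : ((-m0 : ↥M) : C(K, ℂ)) x = -((m0 : C(K, ℂ)) x) := by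
      simp
    rw [hcoe, map_neg, mul_neg, Complex.neg_re, hval x hxX] at hxle
    have hWX : ℓ (W x) < u := hlt (W x) (subset_convexHull ℝ _ (Set.mem_image_of_mem W hxX))
    linarith
  -- extract a finitely-supported measure
  rw [convexHull_eq] at hzero
  obtain ⟨ι, tt, w, z, hw0, hw1, hzs, hcm⟩ := hzero
  rw [Finset.centerMass_eq_of_sum_1 _ _ hw1] at hcm
  have hchoice : ∀ i, i ∈ tt → ∃ x, x ∈ X ∧ W x = z i := fun i hi => hzs i hi
  choose! xp hxpX hxpW using hchoice
  have hWsum : ∑ i ∈ tt, w i • W (xp i) = 0 := by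
    rw [Finset.sum_congr rfl fun i hi => by rw [hxpW i hi]]
    exact hcm
  have hxpA : ∀ i ∈ tt, ‖e (xp i)‖ = A := fun i hi => hxpX i hi
  -- annihilation identity
  have ann : ∀ v : ↥M,
      ∑ i ∈ tt, w i * (e (xp i) * (starRingEnd ℂ) ((v : C(K, ℂ)) (xp i))).re = 0 := by
    intro v
    have h1 : ∀ i ∈ tt, w i * (e (xp i) * (starRingEnd ℂ) ((v : C(K, ℂ)) (xp i))).re
        = ∑ j, ((starRingEnd ℂ) (b.repr v j) * (w i • W (xp i)) j).re := by
      intro i hi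
      rw [hpair v (xp i), Complex.re_sum, Finset.mul_sum]
      refine Finset.sum_congr rfl fun j _ => ?_
      rw [Pi.smul_apply, Complex.real_smul,
        show (starRingEnd ℂ) (b.repr v j) * ((w i : ℂ) * W (xp i) j)
          = (w i : ℂ) * ((starRingEnd ℂ) (b.repr v j) * W (xp i) j) by ring,
        Complex.re_ofReal_mul]
    rw [Finset.sum_congr rfl h1, Finset.sum_comm]
    refine Finset.sum_eq_zero fun j _ => ?_
    have h2 : ∑ i ∈ tt, ((starRingEnd ℂ) (b.repr v j) * (w i • W (xp i)) j).re
        = (((starRingEnd ℂ) (b.repr v j)) * ((∑ i ∈ tt, w i • W (xp i)) j)).re := by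
      rw [← Complex.re_sum, ← Finset.mul_sum, Finset.sum_apply]
    rw [h2, hWsum]
    simp
  -- support of the measure determines elements of M
  have hsupp : ∀ v : ↥M, (∀ i ∈ tt, w i ≠ 0 → (v : C(K, ℂ)) (xp i) = 0) → v = 0 := by
    intro v hv
    by_contra hv0
    set S : Finset K := (tt.filter fun i => w i ≠ 0).image xp with hS
    have hvS : ∀ y ∈ S, (v : C(K, ℂ)) y = 0 := by
      intro y hy
      obtain ⟨i, hi, rfl⟩ := Finset.mem_image.mp hy
      obtain ⟨hit, hwi⟩ := Finset.mem_filter.mp hi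
      exact hv i hit hwi
    by_cases hcard : n ≤ S.card
    · obtain ⟨T, hTS, hT⟩ := Finset.exists_subset_card_eq hcard
      have hEq := T.equivFinOfCardEq hT
      refine hHaar ↑v v.2 (fun hc => hv0 (ZeroMemClass.coe_eq_zero.mp hc))
        ⟨fun i => ↑(hEq.symm i), fun i₁ i₂ h =>
          hEq.symm.injective (Subtype.val_injective h), fun i => ?_⟩
      exact hvS _ (hTS (hEq.symm i).2)
    · push_neg at hcard
      obtain ⟨P₀, hP₀⟩ := hnpts
      obtain ⟨T₂, hT₂sub, hT₂card⟩ := Finset.exists_subset_card_eq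
        (show n - S.card ≤ (P₀ \ S).card by
          have := Finset.le_card_sdiff S P₀
          omega)
      have hdisj : Disjoint S T₂ :=
        (Finset.sdiff_disjoint.symm).mono_right hT₂sub
      have hPcard : (S ∪ T₂).card = n := by
        rw [Finset.card_union_of_disjoint hdisj, hT₂card]
        omega
      obtain ⟨mI, hmIM, hmIval⟩ := interp (S ∪ T₂) hPcard (fun y => e y)
      have h0 := ann ⟨mI, hmIM⟩
      have hterm : ∀ i ∈ tt, w i * (e (xp i)
          * (starRingEnd ℂ) (((⟨mI, hmIM⟩ : ↥M) : C(K, ℂ)) (xp i))).re = w i * A ^ 2 := by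
        intro i hi
        by_cases hwi : w i = 0
        · rw [hwi]; ring
        · have hyS : xp i ∈ S :=
            Finset.mem_image_of_mem xp (Finset.mem_filter.mpr ⟨hi, hwi⟩)
          have : (((⟨mI, hmIM⟩ : ↥M) : C(K, ℂ)) (xp i)) = e (xp i) :=
            hmIval _ (Finset.mem_union_left _ hyS)
          rw [this, Complex.mul_conj, Complex.ofReal_re, ← norm_sq_complex, hxpA i hi]
      rw [Finset.sum_congr rfl hterm, ← Finset.sum_mul, hw1, one_mul] at h0
      have : (0:ℝ) < A ^ 2 := by positivity
      linarith
  -- coercivity constant from compactness of the unit sphere of M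
  haveI : ProperSpace ↥M := FiniteDimensional.proper ℂ ↥M
  set Q : ↥M → ℝ := fun v => ∑ i ∈ tt, w i * ‖(v : C(K, ℂ)) (xp i)‖ ^ 2 with hQ
  have hQcont : Continuous Q := by
    apply continuous_finset_sum
    intro i _
    have h1 : Continuous fun v : ↥M => (v : C(K, ℂ)) (xp i) :=
      (continuous_eval_const (xp i)).comp continuous_subtype_val
    exact continuous_const.mul ((h1.norm).pow 2)
  have hQnn : ∀ v : ↥M, 0 ≤ Q v :=
    fun v => Finset.sum_nonneg fun i hi => mul_nonneg (hw0 i hi) (by positivity)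
  have hQpos : ∀ v : ↥M, v ≠ 0 → 0 < Q v := by
    intro v hv
    rcases (hQnn v).lt_or_eq with h | h
    · exact h
    · exfalso
      apply hv
      apply hsupp v
      intro i hi hwi
      have hterm := (Finset.sum_eq_zero_iff_of_nonneg
        (fun i hi => mul_nonneg (hw0 i hi) (by positivity))).mp h.symm i hi
      rcases mul_eq_zero.mp hterm with h' | h'
      · exact absurd h' hwi
      · have := pow_eq_zero_iff (n := 2) (by norm_num) |>.mp h'
        exact norm_eq_zero.mp this
  have hsphne : (Metric.sphere (0 : ↥M) 1).Nonempty := by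
    haveI : Nontrivial ↥M := Module.nontrivial_of_finrank_pos
      (R := ℂ) (by omega : 0 < Module.finrank ℂ ↥M)
    obtain ⟨v, hv⟩ := exists_ne (0 : ↥M)
    exact ⟨(‖v‖ : ℂ)⁻¹ • v, by
      rw [mem_sphere_zero_iff_norm]
      exact norm_smul_inv_norm hv⟩
  obtain ⟨v₀, hv₀mem, hv₀min⟩ := (isCompact_sphere (0 : ↥M) 1).exists_isMinOn hsphne
    hQcont.continuousOn
  set c : ℝ := Q v₀ with hc
  have hcpos : 0 < c := by
    apply hQpos
    intro h
    rw [h, mem_sphere_zero_iff_norm, norm_zero] at hv₀mem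
    norm_num at hv₀mem
  have hlow : ∀ v : ↥M, c * ‖v‖ ^ 2 ≤ Q v := by
    intro v
    by_cases hv : v = 0
    · subst hv
      have : Q 0 = 0 := by
        rw [hQ]
        apply Finset.sum_eq_zero
        intro i hi
        simp
      rw [this]
      simp
    · have hvnorm : (0:ℝ) < ‖v‖ := norm_pos_iff.mpr hv
      set uv : ↥M := (‖v‖ : ℂ)⁻¹ • v with huvdef
      have huv : uv ∈ Metric.sphere (0 : ↥M) 1 := by
        rw [mem_sphere_zero_iff_norm]
        exact norm_smul_inv_norm hv
      have h1 : Q uv = (‖v‖ ^ 2)⁻¹ * Q v := by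
        rw [hQ, Finset.mul_sum]
        refine Finset.sum_congr rfl fun i hi => ?_
        have hcoe : ((uv : C(K, ℂ)) (xp i)) = (‖v‖ : ℂ)⁻¹ * (v : C(K, ℂ)) (xp i) := by
          rw [huvdef]
          rw [Submodule.coe_smul, ContinuousMap.smul_apply, smul_eq_mul]
        rw [hcoe, norm_mul, mul_pow, norm_inv, Complex.norm_real, Real.norm_eq_abs,
           abs_of_pos hvnorm, inv_pow]
        ring
      have h2 : c ≤ Q uv := hv₀min huv
      rw [h1] at h2
      have h3 := mul_le_mul_of_nonneg_right h2 (by positivity : (0:ℝ) ≤ ‖v‖ ^ 2)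
      calc c * ‖v‖ ^ 2 ≤ (‖v‖ ^ 2)⁻¹ * Q v * ‖v‖ ^ 2 := h3
        _ = Q v := by
            have hne : (‖v‖ : ℝ) ^ 2 ≠ 0 := pow_ne_zero 2 (ne_of_gt hvnorm)
            rw [mul_comm ((‖v‖ ^ 2)⁻¹) (Q v), mul_assoc, inv_mul_cancel₀ hne, mul_one]
  -- conclusion
  refine ⟨c, hcpos, ?_⟩
  intro m hm
  set vm : ↥M := (⟨mstar, hmem⟩ : ↥M) - ⟨m, hm⟩ with hvm
  have hvmc : (vm : C(K, ℂ)) = mstar - m := rfl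
  have hnormvm : ‖vm‖ = ‖m - mstar‖ := by
    rw [Submodule.coe_norm, hvmc, norm_sub_rev]
  have step1 : ∑ i ∈ tt, w i * ‖(f - m) (xp i)‖ ^ 2 ≤ ‖f - m‖ ^ 2 := by
    calc ∑ i ∈ tt, w i * ‖(f - m) (xp i)‖ ^ 2
        ≤ ∑ i ∈ tt, w i * ‖f - m‖ ^ 2 := by
          refine Finset.sum_le_sum fun i hi => ?_
          exact mul_le_mul_of_nonneg_left
            (pow_le_pow_left₀ (norm_nonneg _) ((f - m).norm_coe_le_norm (xp i)) 2)
            (hw0 i hi)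
      _ = ‖f - m‖ ^ 2 := by rw [← Finset.sum_mul, hw1, one_mul]
  have step2 : ∀ i ∈ tt, w i * ‖(f - m) (xp i)‖ ^ 2
      = w i * A ^ 2
        + 2 * (w i * (e (xp i) * (starRingEnd ℂ) ((vm : C(K, ℂ)) (xp i))).re)
        + w i * ‖(vm : C(K, ℂ)) (xp i)‖ ^ 2 := by
    intro i hi
    have heval : (f - m) (xp i) = e (xp i) + (vm : C(K, ℂ)) (xp i) := by
      rw [hvmc]
      simp only [he, ContinuousMap.sub_apply]
      ring
    rw [heval, norm_add_sq_c, hxpA i hi]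
    ring
  have expand : ∑ i ∈ tt, w i * ‖(f - m) (xp i)‖ ^ 2 = A ^ 2 + Q vm := by
    rw [Finset.sum_congr rfl step2, Finset.sum_add_distrib, Finset.sum_add_distrib,
      ← Finset.sum_mul, hw1, one_mul, ← Finset.mul_sum, ann vm, mul_zero, add_zero]
  have hQvm := hlow vm
  rw [hnormvm] at hQvm
  linarith [step1, expand, hQvm]
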